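/- A non-crossing partition pi of {1,...,kn} is k-preserving (every block contains only numbers congruent to each other mod k) if and only if pi is the Kreweras complement of some k-divisible non-crossing partition of {1,...,kn}. -/

import Mathlib

open scoped BigOperators Classical

/-- Partitions of `Fin n` (i.e. of `{1,…,n}`). -/
abbrev NCP (n : ℕ) := Finpartition (Finset.univ : Finset (Fin n))

/-- `x` and `y` lie in the same block of `P`. -/
def pRel {n : ℕ} (P : NCP n) (x y : Fin n) : Prop := ∃ t ∈ P.parts, x ∈ t ∧ y ∈ t

/-- `P` is a non-crossing partition. -/
def IsNonCrossing {n : ℕ} (P : NCP n) : Prop :=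
  ∀ a b c d : Fin n, a < b → b < c → c < d → pRel P a c → pRel P b d → pRel P a b

/-- Every block of `P` has exactly `k` elements (`k`-equal). -/
def IsKEqual (k : ℕ) {n : ℕ} (P : NCP n) : Prop := ∀ t ∈ P.parts, t.card = k

/-- Every block of `P` has size divisible by `k` (`k`-divisible). -/
def IsKDivisible (k : ℕ) {n : ℕ} (P : NCP n) : Prop := ∀ t ∈ P.parts, k ∣ t.card

/-- Every block of `P` contains only numbers of one residue class mod `k`. -/
def IsKPreserving (k : ℕ) {n : ℕ} (P : NCP n) : Prop :=
  ∀ t ∈ P.parts, ∀ x ∈ t, ∀ y ∈ t, (x : ℕ) % k = (y : ℕ) % k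

/-- The relation on `{1,…,2n}` obtained by putting `P` on the odd positions and `Q` on
the even positions (0-indexed: `P` on evens, `Q` on odds). -/
def jointRel {n : ℕ} (P Q : NCP n) (x y : Fin (2 * n)) : Prop :=
  ((x : ℕ) % 2 = 0 ∧ (y : ℕ) % 2 = 0 ∧
      pRel P ⟨(x : ℕ) / 2, by have := x.isLt; omega⟩ ⟨(y : ℕ) / 2, by have := y.isLt; omega⟩) ∨
  ((x : ℕ) % 2 = 1 ∧ (y : ℕ) % 2 = 1 ∧
      pRel Q ⟨(x : ℕ) / 2, by have := x.isLt; omega⟩ ⟨(y : ℕ) / 2, by have := y.isLt; omega⟩)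

/-- A symmetric-relation analogue of non-crossing. -/
def RelNonCrossing {m : ℕ} (R : Fin m → Fin m → Prop) : Prop :=
  ∀ a b c d : Fin m, a < b → b < c → c < d → R a c → R b d → R a b

/-- `Q` is the Kreweras complement of `P`: the union `P ∪ Q` (interleaved) is non-crossing and
`Q` is the largest such partition in the reverse refinement order. -/
def IsKr {n : ℕ} (P Q : NCP n) : Prop :=
  RelNonCrossing (jointRel P Q) ∧ ∀ Q' : NCP n, RelNonCrossing (jointRel P Q') → Q' ≤ Q

/-!
Put `Q` on the even points `2a` and `P` on the odd points `2x+1` of `Fin (2 * m)`. If this union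
is non-crossing and `x < y` lie in one block of `P`, every block of `Q` meeting `(x, y]` lies
inside it, so `y - x` is a sum of block sizes of `Q`; hence `k`-divisibility of `Q` makes `P`
`k`-preserving.

Conversely the Kreweras preimage `Q` of `P` has as blocks the classes of "the chord from `2a` to
`2b` crosses no block of `P`". If `a < c` are consecutive in a block of `Q`, the gap `(a, c)` is a
union of blocks of `Q`, and double complementation puts `a` and `c - 1` in one block of `P`; so
`c ≡ a + 1 (mod k)` when `P` is `k`-preserving. The same holds across the wrap-around gap, and
going once around a block `B` gives `m ≡ #B (mod k)`.
-/

open Finset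

variable {m : ℕ}

section Blocks

variable {P Q : NCP m} {a b c u v w x y z : Fin m}

lemma pRel_iff_part_eq : pRel P x y ↔ P.part x = P.part y := by
  rw [← P.mem_part_iff_part_eq_part (mem_univ x) (mem_univ y), P.mem_part_iff_exists]
  rfl

lemma pRel_refl (P : NCP m) (x : Fin m) : pRel P x x := pRel_iff_part_eq.2 rfl

lemma pRel.symm (h : pRel P x y) : pRel P y x := pRel_iff_part_eq.2 (pRel_iff_part_eq.1 h).symm

lemma pRel.trans (h : pRel P x y) (h' : pRel P y z) : pRel P x z :=
  pRel_iff_part_eq.2 ((pRel_iff_part_eq.1 h).trans (pRel_iff_part_eq.1 h'))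

lemma pRel_of_mem {t : Finset (Fin m)} (ht : t ∈ P.parts) (hx : x ∈ t) (hy : y ∈ t) :
    pRel P x y :=
  ⟨t, ht, hx, hy⟩

lemma mem_of_pRel {t : Finset (Fin m)} (ht : t ∈ P.parts) (hx : x ∈ t) (h : pRel P x y) :
    y ∈ t := by
  obtain ⟨s, hs, hxs, hys⟩ := h
  rwa [P.eq_of_mem_parts ht hs hx hxs]

lemma le_of_pRel_imp (h : ∀ x y, pRel P x y → pRel Q x y) : P ≤ Q := by
  intro t ht
  obtain ⟨x, hx⟩ := P.nonempty_of_mem_parts ht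
  refine ⟨Q.part x, Q.part_mem.2 (mem_univ x), fun y hy => ?_⟩
  exact Q.mem_part_iff_exists.2 (h x y (pRel_of_mem ht hx hy)).symm

lemma IsKPreserving.modEq {k : ℕ} (hP : IsKPreserving k P) (h : pRel P x y) :
    (x : ℕ) ≡ y [MOD k] := by
  obtain ⟨t, ht, hx, hy⟩ := h
  exact hP t ht x hx y hy

lemma dvd_card_of_saturated {k : ℕ} (hQ : IsKDivisible k Q) {J : Finset (Fin m)}
    (hJ : ∀ u v, pRel Q u v → u ∈ J → v ∈ J) : k ∣ #J := by
  rw [← (Q.restrict (subset_univ J)).sum_card_parts,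
    Q.sum_restrict (subset_univ J) card card_empty]
  refine dvd_sum fun S hS => ?_
  rcases (S ∩ J).eq_empty_or_nonempty with h | ⟨u, hu⟩
  · simp [h]
  · rw [inf_eq_inter, inter_eq_left.2 fun v hv =>
      hJ u v (pRel_of_mem hS (mem_inter.1 hu).1 hv) (mem_inter.1 hu).2]
    exact hQ S hS

lemma IsNonCrossing.nested (hQ : IsNonCrossing Q) (hac : pRel Q a c) (hab : ¬pRel Q a b)
    (hbw : pRel Q b w) (h₁ : a < b) (h₂ : b < c) : a < w ∧ w < c := by
  have hwa : w ≠ a := by rintro rfl; exact hab hbw.symm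
  have hwc : w ≠ c := by rintro rfl; exact hab (hac.trans hbw.symm)
  constructor
  · by_contra! h
    exact hab ((hQ w a b c (lt_of_le_of_ne h hwa) h₁ h₂ hbw.symm hac).symm.trans hbw.symm)
  · by_contra! h
    exact hab (hQ a b c w h₁ h₂ (lt_of_le_of_ne' h hwc) hac hbw)

lemma IsNonCrossing.saturated_Ioo (hQ : IsNonCrossing Q) (hac : pRel Q a c)
    (hgap : ∀ z, a < z → z < c → ¬pRel Q a z) (huv : pRel Q u v) (hu : a < u ∧ u < c) :
    a < v ∧ v < c :=
  hQ.nested hac (hgap u hu.1 hu.2) huv hu.1 hu.2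

lemma IsNonCrossing.saturated_Icc (hQ : IsNonCrossing Q) (hac : pRel Q a c)
    (hbd : ∀ z, pRel Q a z → a ≤ z ∧ z ≤ c) (huv : pRel Q u v) (hu : a ≤ u ∧ u ≤ c) :
    a ≤ v ∧ v ≤ c := by
  by_cases hau : pRel Q a u
  · exact hbd v (hau.trans huv)
  · have hua : u ≠ a := by rintro rfl; exact hau (pRel_refl Q u)
    have huc : u ≠ c := by rintro rfl; exact hau hac
    have := hQ.nested hac hau huv (lt_of_le_of_ne hu.1 hua.symm) (lt_of_le_of_ne hu.2 huc)
    exact ⟨this.1.le, this.2.le⟩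

end Blocks

section Kreweras

variable {P Q : NCP m} {a b c p q r t u v x y : Fin m}

/-- `¬(a ≤ x ↔ b ≤ x)` says that `x ∈ [min a b, max a b)`, i.e. that the odd point `2x+1` lies
between the even points `2a` and `2b` of `Fin (2 * m)`; so `krRel P a b` says that no block of `P`
crosses the chord from `2a` to `2b`. -/
def krRel (P : NCP m) (a b : Fin m) : Prop :=
  ∀ x y, pRel P x y → ((a ≤ x ↔ b ≤ x) ↔ (a ≤ y ↔ b ≤ y))

lemma krRel_refl (P : NCP m) (a : Fin m) : krRel P a a := fun _ _ _ => iff_of_true Iff.rfl Iff.rfl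

lemma krRel.symm (h : krRel P a b) : krRel P b a := fun x y hxy => by
  have := h x y hxy
  tauto

lemma krRel.trans (h : krRel P a b) (h' : krRel P b c) : krRel P a c := fun x y hxy => by
  have := h x y hxy
  have := h' x y hxy
  tauto

lemma krRel_of_forall (h : ∀ x y, pRel P x y → ¬(a ≤ x ↔ b ≤ x) → ¬(a ≤ y ↔ b ≤ y)) :
    krRel P a b := fun x y hxy => by
  have := h x y hxy
  have := h y x hxy.symm
  tauto

def krSetoid (P : NCP m) : Setoid (Fin m) :=
  ⟨krRel P, ⟨krRel_refl P, krRel.symm, krRel.trans⟩⟩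

/-- The preimage of `P` under the Kreweras complement. -/
noncomputable def krInv (P : NCP m) : NCP m := Finpartition.ofSetoid (krSetoid P)

lemma pRel_krInv_iff : pRel (krInv P) x y ↔ krRel P x y := by
  rw [pRel_iff_part_eq, ← (krInv P).mem_part_iff_part_eq_part (mem_univ x) (mem_univ y),
    krInv, Finpartition.mem_part_ofSetoid_iff_rel]
  exact ⟨krRel.symm, krRel.symm⟩

lemma krInv_isNonCrossing : IsNonCrossing (krInv P) := by
  intro a b c d hab hbc hcd hac hbd
  rw [pRel_krInv_iff] at hac hbd ⊢
  refine krRel_of_forall fun x y hxy hx => ?_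
  have := hac x y hxy
  have := hbd x y hxy
  omega

lemma IsNonCrossing.krRel_of_gap (hP : IsNonCrossing P) (hty : pRel P t y)
    (hgap : ∀ z, t < z → z < y → ¬pRel P t z) (ht' : (u : ℕ) = t + 1) (htu : u ≤ y) :
    krRel P u y :=
  krRel_of_forall fun x x' hxx' hx => by
    have := hP.saturated_Ioo hty hgap hxx' (by omega)
    omega

lemma IsNonCrossing.krRel_of_bounds (hP : IsNonCrossing P) (hrt : pRel P r t)
    (hbd : ∀ z, pRel P r z → r ≤ z ∧ z ≤ t) (ht' : (u : ℕ) = t + 1) : krRel P u r :=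
  krRel_of_forall fun x x' hxx' hx => by
    have := hbd t hrt
    have := hP.saturated_Icc hrt hbd hxx' (by omega)
    omega

/-- The double complementation `Kr (krInv P) = P`, tested on one pair `p ≤ q`. -/
lemma IsNonCrossing.pRel_of_saturated (hP : IsNonCrossing P) (hpq : p ≤ q)
    (H : ∀ u v, krRel P u v → p < u → u ≤ q → p < v ∧ v ≤ q) : pRel P p q := by
  set T : Finset (Fin m) := {z | pRel P p z ∧ z ≤ q}
  have hpT : p ∈ T := by simp [T, pRel_refl, hpq]
  set t := T.max' ⟨p, hpT⟩
  have ht : pRel P p t ∧ t ≤ q := (mem_filter.1 (T.max'_mem ⟨p, hpT⟩)).2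
  have hpt : p ≤ t := T.le_max' p hpT
  have ht_max : ∀ z, pRel P p z → z ≤ q → z ≤ t := fun z h hz => T.le_max' z (by simp [T, h, hz])
  rcases ht.2.eq_or_lt with htq | htq
  · exact htq ▸ ht.1
  -- the chord from `2t' = 2t+2` to the cyclically next element of the block of `p` leaves `(p, q]`
  obtain ⟨t', ht'⟩ : ∃ t' : Fin m, (t' : ℕ) = t + 1 := ⟨⟨t + 1, by omega⟩, rfl⟩
  suffices ∃ w, krRel P t' w ∧ ¬(p < w ∧ w ≤ q) by
    obtain ⟨w, htw, hw⟩ := this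
    exact absurd (H t' w htw (by omega) (by omega)) hw
  by_cases hbeyond : ∃ z, pRel P p z ∧ q < z
  · set Y : Finset (Fin m) := {z | pRel P p z ∧ q < z}
    obtain ⟨z₀, hz₀⟩ := hbeyond
    have hY : Y.Nonempty := ⟨z₀, by simp [Y, hz₀]⟩
    have hy : pRel P p (Y.min' hY) ∧ q < Y.min' hY := (mem_filter.1 (Y.min'_mem hY)).2
    refine ⟨Y.min' hY, hP.krRel_of_gap (ht.1.symm.trans hy.1) (fun z htz hzy htz' => ?_) ht'
      (by omega), by omega⟩
    have hpz := ht.1.trans htz'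
    rcases le_or_gt z q with hzq | hqz
    · exact (ht_max z hpz hzq).not_gt htz
    · exact (Y.min'_le z (by simp [Y, hpz, hqz])).not_gt hzy
  · push Not at hbeyond
    set R : Finset (Fin m) := {z | pRel P p z}
    have hpR : p ∈ R := by simp [R, pRel_refl]
    have hr : pRel P p (R.min' ⟨p, hpR⟩) := (mem_filter.1 (R.min'_mem ⟨p, hpR⟩)).2
    refine ⟨R.min' ⟨p, hpR⟩, hP.krRel_of_bounds (hr.symm.trans ht.1) (fun z hrz => ?_) ht',
      by have := R.min'_le p hpR; omega⟩
    have hpz := hr.trans hrz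
    exact ⟨R.min'_le z (by simp [R, hpz]), ht_max z hpz (hbeyond z hpz)⟩

end Kreweras

section Joint

variable {P Q : NCP m} {a b u v x y : Fin m}

def evenPt (a : Fin m) : Fin (2 * m) := ⟨2 * a, by omega⟩

def oddPt (a : Fin m) : Fin (2 * m) := ⟨2 * a + 1, by omega⟩

lemma jointRel_evenPt : jointRel Q P (evenPt a) (evenPt b) ↔ pRel Q a b := by
  simp [jointRel, evenPt]

lemma jointRel_oddPt : jointRel Q P (oddPt a) (oddPt b) ↔ pRel P a b := by
  simp [jointRel, oddPt, Nat.mul_add_div]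

lemma not_jointRel_evenPt_oddPt : ¬jointRel Q P (evenPt a) (oddPt b) := by
  simp [jointRel, evenPt, oddPt]

lemma not_jointRel_oddPt_evenPt : ¬jointRel Q P (oddPt a) (evenPt b) := by
  simp [jointRel, evenPt, oddPt]

lemma RelNonCrossing.saturated_Ioc (h : RelNonCrossing (jointRel Q P))
    (hP : pRel P x y) (huv : pRel Q u v) (hu : x < u ∧ u ≤ y) : x < v ∧ v ≤ y := by
  by_contra! hv
  rcases le_or_gt v x with hvx | hxv
  · refine not_jointRel_evenPt_oddPt (h (evenPt v) (oddPt x) (evenPt u) (oddPt y) ?_ ?_ ?_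
      (jointRel_evenPt.2 huv.symm) (jointRel_oddPt.2 hP)) <;>
    simp only [evenPt, oddPt, Fin.mk_lt_mk] <;> omega
  · refine not_jointRel_oddPt_evenPt (h (oddPt x) (evenPt u) (oddPt y) (evenPt v) ?_ ?_ ?_
      (jointRel_oddPt.2 hP) (jointRel_evenPt.2 huv)) <;>
    simp only [evenPt, oddPt, Fin.mk_lt_mk] <;> omega

lemma relNonCrossing_jointRel (hQ : IsNonCrossing Q) (hP : IsNonCrossing P)
    (hQP : ∀ a c, pRel Q a c → krRel P a c) : RelNonCrossing (jointRel Q P) := by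
  intro a b c d hab hbc hcd hac hbd
  rcases hac with ⟨ha, hc, hac⟩ | ⟨ha, hc, hac⟩ <;> rcases hbd with ⟨hb, hd, hbd⟩ | ⟨hb, hd, hbd⟩
  · exact .inl ⟨ha, hb, hQ _ _ _ _ (Fin.mk_lt_mk.2 (by omega)) (Fin.mk_lt_mk.2 (by omega))
      (Fin.mk_lt_mk.2 (by omega)) hac hbd⟩
  · have := hQP _ _ hac _ _ hbd
    simp only [Fin.mk_le_mk] at this
    omega
  · have := hQP _ _ hbd _ _ hac
    simp only [Fin.mk_le_mk] at this
    omega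
  · exact .inr ⟨ha, hb, hP _ _ _ _ (Fin.mk_lt_mk.2 (by omega)) (Fin.mk_lt_mk.2 (by omega))
      (Fin.mk_lt_mk.2 (by omega)) hac hbd⟩

end Joint

lemma Finset.max'_add_one_modEq {k : ℕ} (B : Finset (Fin m)) (hB : B.Nonempty)
    (hstep : ∀ a ∈ B, ∀ c ∈ B, a < c → (∀ z ∈ B, ¬(a < z ∧ z < c)) → (c : ℕ) ≡ a + 1 [MOD k]) :
    (B.max' hB : ℕ) + 1 ≡ B.min' hB + #B [MOD k] := by
  induction B using Finset.induction_on_max with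
  | empty => exact absurd hB not_nonempty_empty
  | insert a s has ih =>
    rcases s.eq_empty_or_nonempty with rfl | hs
    · simp [Nat.ModEq.refl]
    have hsa : s.max' hs < a := has _ (s.max'_mem hs)
    have hstep_s : ∀ a' ∈ s, ∀ c ∈ s, a' < c → (∀ z ∈ s, ¬(a' < z ∧ z < c)) →
        (c : ℕ) ≡ a' + 1 [MOD k] := fun a' ha' c hc hac hgap =>
      hstep a' (mem_insert_of_mem ha') c (mem_insert_of_mem hc) hac fun z hz => by
        rcases mem_insert.1 hz with rfl | hz
        · exact fun h => (has c hc).not_gt h.2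
        · exact hgap z hz
    have ha : (a : ℕ) ≡ s.max' hs + 1 [MOD k] :=
      hstep _ (mem_insert_of_mem (s.max'_mem hs)) a (mem_insert_self a s) hsa fun z hz h => by
        rcases mem_insert.1 hz with rfl | hz
        · exact h.2.false
        · exact (s.le_max' z hz).not_gt h.1
    rw [max'_insert a s hs, min'_insert a s hs, max_eq_left hsa.le,
      min_eq_right (has _ (s.min'_mem hs)).le, card_insert_of_notMem fun h => (has a h).false]
    exact (ha.add_right 1).trans ((ih hs hstep_s).add_right 1)

section Main

variable {k : ℕ} {P Q : NCP m} {a c : Fin m}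

lemma forall_pRel_of_lt {R : Fin m → Fin m → Prop} (hrefl : ∀ x, R x x)
    (hsymm : ∀ x y, R x y → R y x) (h : ∀ x y, x < y → pRel P x y → R x y) :
    ∀ x y, pRel P x y → R x y := fun x y hxy => by
  rcases lt_trichotomy x y with hlt | rfl | hgt
  · exact h x y hlt hxy
  · exact hrefl x
  · exact hsymm y x (h y x hgt hxy.symm)

lemma IsNonCrossing.isKr_krInv (hP : IsNonCrossing P) : IsKr (krInv P) P := by
  refine ⟨relNonCrossing_jointRel krInv_isNonCrossing hP fun _ _ => pRel_krInv_iff.1,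
    fun Q' hQ' => le_of_pRel_imp (forall_pRel_of_lt (pRel_refl P) (fun _ _ => pRel.symm) ?_)⟩
  exact fun x y hxy hxy' => hP.pRel_of_saturated hxy.le fun u v huv hu hu' =>
    hQ'.saturated_Ioc hxy' (pRel_krInv_iff.2 huv) ⟨hu, hu'⟩

lemma RelNonCrossing.isKPreserving (h : RelNonCrossing (jointRel Q P)) (hQ : IsKDivisible k Q) :
    IsKPreserving k P := by
  have : ∀ x y, pRel P x y → (x : ℕ) ≡ y [MOD k] :=
    forall_pRel_of_lt (fun _ => Nat.ModEq.refl _) (fun _ _ => Nat.ModEq.symm) fun x y hxy hP => by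
      have hdvd : k ∣ #(Ioc x y) := dvd_card_of_saturated hQ fun u v huv hu => by
        simpa using h.saturated_Ioc hP huv (by simpa using hu)
      rw [Fin.card_Ioc] at hdvd
      exact (Nat.modEq_iff_dvd' hxy.le).2 hdvd
  exact fun t ht x hx y hy => this x y (pRel_of_mem ht hx hy)

/-- Consecutive elements `a < c` of a block of `krInv P` bound a gap `(a, c)` that is a union of
blocks of `krInv P`, hence `a` and `c - 1` lie in one block of `P`. -/
lemma IsNonCrossing.modEq_of_consecutive (hP : IsNonCrossing P) (hpres : IsKPreserving k P)
    (hac : pRel (krInv P) a c) (hlt : a < c) (hgap : ∀ z, a < z → z < c → ¬pRel (krInv P) a z) :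
    (c : ℕ) ≡ a + 1 [MOD k] := by
  obtain ⟨x, hx⟩ : ∃ x : Fin m, (x : ℕ) + 1 = c := ⟨⟨c - 1, by omega⟩, by simp; omega⟩
  have hax : pRel P a x := hP.pRel_of_saturated (by omega) fun u v huv hu hu' => by
    have := krInv_isNonCrossing.saturated_Ioo hac hgap (pRel_krInv_iff.2 huv) ⟨hu, by omega⟩
    omega
  rw [← hx]
  exact ((hpres.modEq hax).add_right 1).symm

lemma IsNonCrossing.isKDivisible_krInv (hP : IsNonCrossing P) (hkm : k ∣ m)
    (hpres : IsKPreserving k P) : IsKDivisible k (krInv P) := by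
  intro B hB
  have hne := (krInv P).nonempty_of_mem_parts hB
  set b₀ := B.min' hne
  set b₁ := B.max' hne
  have hb₀₁ : b₀ ≤ b₁ := B.min'_le _ (B.max'_mem hne)
  have hchain : (b₁ : ℕ) + 1 ≡ b₀ + #B [MOD k] :=
    B.max'_add_one_modEq hne fun a ha c hc hac hgap =>
      hP.modEq_of_consecutive hpres (pRel_of_mem hB ha hc) hac fun z h₁ h₂ hz =>
        hgap z (mem_of_pRel hB ha hz) ⟨h₁, h₂⟩
  have hhull : ∀ u v, krRel P u v → b₀ ≤ u → u ≤ b₁ → b₀ ≤ v ∧ v ≤ b₁ := fun u v huv h₁ h₂ =>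
    krInv_isNonCrossing.saturated_Icc (pRel_of_mem hB (B.min'_mem hne) (B.max'_mem hne))
      (fun z hz => ⟨B.min'_le z (mem_of_pRel hB (B.min'_mem hne) hz),
        B.le_max' z (mem_of_pRel hB (B.min'_mem hne) hz)⟩)
      (pRel_krInv_iff.2 huv) ⟨h₁, h₂⟩
  -- the wrap-around gap, from `b₁` to `b₀` through `m - 1` and `0`
  have hwrap : (b₁ : ℕ) + 1 ≡ b₀ [MOD k] := by
    rcases Nat.eq_zero_or_pos b₀ with h0 | h0
    · obtain ⟨l, hl⟩ : ∃ l : Fin m, (l : ℕ) + 1 = m := ⟨⟨m - 1, by omega⟩, by simp; omega⟩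
      have hb₁l : pRel P b₁ l := hP.pRel_of_saturated (by omega) fun u v huv hu hu' => by
        refine ⟨?_, by omega⟩
        by_contra! hv
        exact hu.not_ge (hhull v u huv.symm (by omega) hv).2
      rw [h0]
      calc (b₁ : ℕ) + 1 ≡ l + 1 [MOD k] := (hpres.modEq hb₁l).add_right 1
        _ = m := hl
        _ ≡ 0 [MOD k] := Nat.modEq_zero_iff_dvd.2 hkm
    · obtain ⟨l, hl⟩ : ∃ l : Fin m, (l : ℕ) + 1 = b₀ := ⟨⟨b₀ - 1, by omega⟩, by simp; omega⟩
      have hlb₁ : pRel P l b₁ := hP.pRel_of_saturated (by omega) fun u v huv hu hu' => by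
        have := hhull u v huv (by omega) hu'
        omega
      rw [← hl]
      exact ((hpres.modEq hlb₁).add_right 1).symm
  exact Nat.modEq_zero_iff_dvd.1 (Nat.ModEq.add_left_cancel' b₀ (hwrap.symm.trans hchain)).symm

end Main

theorem stmt8_general (k n : ℕ) (P : NCP (k * n))
    (hP : IsNonCrossing P) :
    IsKPreserving k P ↔
      ∃ Q : NCP (k * n), IsNonCrossing Q ∧ IsKDivisible k Q ∧ IsKr Q P := by
  constructor
  · exact fun hpres => ⟨krInv P, krInv_isNonCrossing,
      hP.isKDivisible_krInv (dvd_mul_right k n) hpres, hP.isKr_krInv⟩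
  · exact fun ⟨Q, _, hQ, hjoint, _⟩ => hjoint.isKPreserving hQ

/-- A non-crossing partition of `{1,…,kn}` is `k`-preserving if and only if it is the Kreweras
complement of some `k`-divisible non-crossing partition. -/
theorem stmt8 (k n : ℕ) (hk : 0 < k) (hn : 0 < n) (P : NCP (k * n))
    (hP : IsNonCrossing P) :
    IsKPreserving k P ↔
      ∃ Q : NCP (k * n), IsNonCrossing Q ∧ IsKDivisible k Q ∧ IsKr Q P :=
  stmt8_general k n P hP
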